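/- (Theorem 3.) Assume the symmetry condition (simm) and let 1 ≤ p ≤ 2. If for some z_0 ∈ ℝ every solution of the vector equation (1v) at z_0 belongs to l^p_n, then for every z ∈ ℂ every solution of (1v) at z belongs to l^p_n. -/

import Mathlib

/-!
At a real point `z₀`, hypothesis (simm) makes the conjugate transposes `Yᴴ`, `Zᴴ` of the
fundamental matrix solutions of (1) (with `Y₀ = 0, Y₁ = 1` and `Z₀ = 1, Z₁ = 0`) solutions of
the adjoint equation (2), so their Wronskians with solutions of (1) at `z₀` are constant. This
inverts the Casorati matrix of `(Y, Z)` and yields, for a solution `u` of (1v) at any `z`, the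
variation of constants formula `u_{j+1} = Z_{j+1} w_j - Y_{j+1} w'_j`, where the vector Wronskians
`w, w'` move by `(z - z₀) Yᴴ u` and `(z - z₀) Zᴴ u` per step. With
`f_j = n (‖Y_{j+1}‖ + ‖Z_{j+1}‖)` this gives
`‖u_{j+1}‖ ≤ f_j (‖u₀‖ + ‖u₁‖ + |z - z₀| ∑_{k<j} f_k ‖u_{k+1}‖)`. The columns of `Y, Z` are
solutions at `z₀`, so `f ∈ ℓ^p ⊆ ℓ²`, and the discrete Grönwall inequality with `∑ f_k² < ∞`
bounds `‖u_{j+1}‖` by a multiple of `f_j`; hence `u ∈ ℓ^p`.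
-/

open Matrix Filter
open scoped BigOperators ENNReal ComplexOrder

/-- Square `n × n` complex matrices. -/
abbrev Mat (n : ℕ) := Matrix (Fin n) (Fin n) ℂ

/-- `Alo b j` is the coefficient `A_{j,j-1}` (so `Alo b 0 = A_{0,-1} = -E` and
`Alo b (j+1) = A_{j+1,j} = b j`). -/
def Alo {n : ℕ} (b : ℕ → Mat n) : ℕ → Mat n
  | 0 => -1
  | j + 1 => b j

/-- `Aup a j` is the coefficient `A_{j-1,j}` (so `Aup a 0 = A_{-1,0} = -E` and
`Aup a (j+1) = A_{j,j+1} = a j`). -/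
def Aup {n : ℕ} (a : ℕ → Mat n) : ℕ → Mat n
  | 0 => -1
  | j + 1 => a j

/-- Matrix equation (1).  Sequences are indexed by `ℕ`, where index `k` represents the
paper index `k - 1` (so index `0` is the paper index `-1`).  Here `d j = A_{j,j}`,
`a j = A_{j,j+1}`, `b j = A_{j+1,j}`. -/
def SolEq1 {n : ℕ} (d a b : ℕ → Mat n) (z : ℂ) (Y : ℕ → Mat n) : Prop :=
  ∀ j : ℕ, Alo b j * Y j + d j * Y (j + 1) + a j * Y (j + 2) = z • Y (j + 1)

/-- Matrix equation (2), with the same index shift. -/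
def SolEq2 {n : ℕ} (d a b : ℕ → Mat n) (z : ℂ) (Y : ℕ → Mat n) : Prop :=
  ∀ j : ℕ, Y j * Aup a j + Y (j + 1) * d j + Y (j + 2) * b j = z • Y (j + 1)

/-- Vector equation (1v), with the same index shift. -/
def SolEq1v {n : ℕ} (d a b : ℕ → Mat n) (z : ℂ) (u : ℕ → Fin n → ℂ) : Prop :=
  ∀ j : ℕ, Alo b j *ᵥ u j + d j *ᵥ u (j + 1) + a j *ᵥ u (j + 2) = z • u (j + 1)

/-- Vector equation (2v) for the row vectors `v_j^*`, with the same index shift. -/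
def SolEq2v {n : ℕ} (d a b : ℕ → Mat n) (z : ℂ) (v : ℕ → Fin n → ℂ) : Prop :=
  ∀ j : ℕ, star (v j) ᵥ* Aup a j + star (v (j + 1)) ᵥ* d j + star (v (j + 2)) ᵥ* b j
    = z • star (v (j + 1))

open Finset Real

-- The entrywise sup norm on matrices: it satisfies `‖Aᴴ‖ = ‖A‖`.
attribute [local instance] Matrix.normedAddCommGroup

namespace Matrix

variable {l m α : Type*} [Fintype l] [Fintype m] [NormedRing α]

theorem norm_mulVec_le_card_mul (A : Matrix m l α) (v : l → α) :
    ‖A *ᵥ v‖ ≤ Fintype.card l * ‖A‖ * ‖v‖ := by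
  refine (pi_norm_le_iff_of_nonneg (by positivity)).2 fun i => ?_
  calc ‖(A *ᵥ v) i‖ ≤ ∑ k, ‖A i k * v k‖ := norm_sum_le _ _
    _ ≤ ∑ _k : l, ‖A‖ * ‖v‖ := sum_le_sum fun k _ => (norm_mul_le _ _).trans <|
        mul_le_mul (norm_entry_le_entrywise_sup_norm A) (norm_le_pi_norm v k)
          (norm_nonneg _) (norm_nonneg _)
    _ = Fintype.card l * ‖A‖ * ‖v‖ := by simp [mul_assoc]

theorem norm_le_sum_norm_mulVec_single [DecidableEq l] (A : Matrix m l α) :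
    ‖A‖ ≤ ∑ k, ‖A *ᵥ Pi.single k 1‖ := by
  refine (norm_le_iff (by positivity)).2 fun i k => ?_
  calc ‖A i k‖ = ‖(A *ᵥ Pi.single k 1) i‖ := by simp
    _ ≤ ‖A *ᵥ Pi.single k 1‖ := norm_le_pi_norm _ i
    _ ≤ ∑ k, ‖A *ᵥ Pi.single k 1‖ :=
        single_le_sum (f := fun k => ‖A *ᵥ Pi.single k 1‖) (fun _ _ => norm_nonneg _)
          (mem_univ k)

end Matrix

theorem memℓp_nat_add_iff {E : Type*} [NormedAddCommGroup E] {p : ℝ≥0∞} (hp : 0 < p.toReal)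
    {f : ℕ → E} (k : ℕ) : Memℓp (fun j => f (j + k)) p ↔ Memℓp f p := by
  simp only [memℓp_gen_iff hp]
  exact summable_nat_add_iff (f := fun j => ‖f j‖ ^ p.toReal) k

theorem exists_le_const_mul_of_le_mul_add_sum {f g : ℕ → ℝ} {c D : ℝ} (hc : 0 ≤ c) (hD : 0 ≤ D)
    (hf : ∀ j, 0 ≤ f j) (hf2 : Summable fun j => f j ^ 2)
    (h : ∀ j, g j ≤ f j * (D + c * ∑ k ∈ range j, f k * g k)) :
    ∃ K, ∀ j, g j ≤ K * f j := by
  set T : ℕ → ℝ := fun j => D + c * ∑ k ∈ range j, f k * g k with hT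
  have hstep : ∀ j, T (j + 1) ≤ (1 + c * f j ^ 2) * T j + 0 := fun j => by
    have := mul_le_mul_of_nonneg_left (h j) (mul_nonneg hc (hf j))
    simp only [hT, sum_range_succ]
    nlinarith
  have hT0 : T 0 = D := by simp [hT]
  refine ⟨D * exp (c * ∑' j, f j ^ 2), fun j => ?_⟩
  have hTj := discrete_gronwall (u := T) (n₀ := 0) (hT0 ▸ hD) (fun j _ => hstep j)
    (fun j _ => by positivity) (fun _ _ => le_rfl) (Nat.zero_le j)
  simp only [hT0, Nat.Ico_zero_eq_range, sum_const_zero, add_zero, ← mul_sum] at hTj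
  calc g j ≤ f j * T j := h j
    _ ≤ f j * (D * exp (c * ∑' j, f j ^ 2)) := by
        refine mul_le_mul_of_nonneg_left (hTj.trans ?_) (hf j)
        gcongr
        exact hf2.sum_le_tsum _ fun k _ => sq_nonneg (f k)
    _ = D * exp (c * ∑' j, f j ^ 2) * f j := mul_comm _ _

section Recurrence

variable {n : ℕ} {d a b : ℕ → Mat n}

noncomputable def fundSol (d a b : ℕ → Mat n) (z : ℂ) (Y₀ Y₁ : Mat n) : ℕ → Mat n
  | 0 => Y₀
  | 1 => Y₁
  | j + 2 => (a j)⁻¹ * (z • fundSol d a b z Y₀ Y₁ (j + 1) - d j * fundSol d a b z Y₀ Y₁ (j + 1)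
      - Alo b j * fundSol d a b z Y₀ Y₁ j)

theorem solEq1_fundSol (ha : ∀ j, IsUnit (a j)) (z : ℂ) (Y₀ Y₁ : Mat n) :
    SolEq1 d a b z (fundSol d a b z Y₀ Y₁) := by
  intro j
  rw [fundSol.eq_3, mul_nonsing_inv_cancel_left _ _ ((isUnit_iff_isUnit_det _).mp (ha j))]
  abel

theorem SolEq1.mulVec {z : ℂ} {V : ℕ → Mat n} (hV : SolEq1 d a b z V) (x : Fin n → ℂ) :
    SolEq1v d a b z fun j => V j *ᵥ x := fun j => by
  simpa only [add_mulVec, smul_mulVec, mulVec_mulVec] using congrArg (· *ᵥ x) (hV j)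

theorem conjTranspose_Alo (hba : ∀ j, b j = a j) (ha : ∀ j, (a j).IsHermitian) :
    ∀ j, (Alo b j)ᴴ = Aup a j
  | 0 => by simp [Alo, Aup]
  | j + 1 => by simp [Alo, Aup, hba j, (ha j).eq]

theorem SolEq1.conjTranspose (hd : ∀ j, (d j).IsHermitian) (hba : ∀ j, b j = a j)
    (ha : ∀ j, (a j).IsHermitian) {z : ℝ} {Y : ℕ → Mat n} (hY : SolEq1 d a b z Y) :
    SolEq2 d a b z fun j => (Y j)ᴴ := fun j => by
  simpa [conjTranspose_Alo hba ha, (hd j).eq, (ha j).eq, hba j] using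
    congrArg (·ᴴ) (hY j)

def wronskian (a b : ℕ → Mat n) (U V : ℕ → Mat n) (j : ℕ) : Mat n :=
  U j * (Aup a j * V (j + 1)) - U (j + 1) * (Alo b j * V j)

def wronskianVec (a b : ℕ → Mat n) (U : ℕ → Mat n) (v : ℕ → Fin n → ℂ) (j : ℕ) : Fin n → ℂ :=
  U j *ᵥ (Aup a j *ᵥ v (j + 1)) - U (j + 1) *ᵥ (Alo b j *ᵥ v j)

theorem wronskian_mulVec (U V : ℕ → Mat n) (x : Fin n → ℂ) (j : ℕ) :
    wronskian a b U V j *ᵥ x = wronskianVec a b U (fun k => V k *ᵥ x) j := by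
  simp only [wronskian, wronskianVec, sub_mulVec, mulVec_mulVec]

theorem wronskianVec_succ {w z : ℂ} {U : ℕ → Mat n} {v : ℕ → Fin n → ℂ}
    (hU : SolEq2 d a b w U) (hv : SolEq1v d a b z v) (j : ℕ) :
    wronskianVec a b U v (j + 1) = wronskianVec a b U v j + (z - w) • (U (j + 1) *ᵥ v (j + 1)) := by
  have hv' : a j *ᵥ v (j + 2) = z • v (j + 1) - Alo b j *ᵥ v j - d j *ᵥ v (j + 1) := by
    linear_combination (norm := abel) hv j
  have hU' : U (j + 2) * b j = w • U (j + 1) - U j * Aup a j - U (j + 1) * d j := by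
    linear_combination (norm := abel) hU j
  change U (j + 1) *ᵥ (a j *ᵥ v (j + 2)) - U (j + 2) *ᵥ (b j *ᵥ v (j + 1)) = _
  rw [hv', mulVec_mulVec, hU']
  simp only [wronskianVec, mulVec_sub, mulVec_smul, sub_mulVec, smul_mulVec, mulVec_mulVec,
    sub_smul]
  abel

theorem wronskianVec_eq_add_sum {w z : ℂ} {U : ℕ → Mat n} {v : ℕ → Fin n → ℂ}
    (hU : SolEq2 d a b w U) (hv : SolEq1v d a b z v) (j : ℕ) :
    wronskianVec a b U v j =
      wronskianVec a b U v 0 + (z - w) • ∑ k ∈ range j, U (k + 1) *ᵥ v (k + 1) := by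
  induction j with
  | zero => simp
  | succ j ih => rw [wronskianVec_succ hU hv, ih, sum_range_succ, smul_add, add_assoc]

theorem wronskian_eq_wronskian_zero {z : ℂ} {U V : ℕ → Mat n} (hU : SolEq2 d a b z U)
    (hV : SolEq1 d a b z V) (j : ℕ) : wronskian a b U V j = wronskian a b U V 0 := by
  classical
  refine ext_of_mulVec_single fun i => ?_
  rw [wronskian_mulVec, wronskian_mulVec, wronskianVec_eq_add_sum hU (hV.mulVec _), sub_self,
    zero_smul, add_zero]

end Recurrence

section Representation

variable {n : ℕ} {a b : ℕ → Mat n}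

theorem eq_sub_mulVec_wronskianVec {Y Z : ℕ → Mat n} {j : ℕ}
    (hYY : wronskian a b (fun k => (Y k)ᴴ) Y j = 0)
    (hYZ : wronskian a b (fun k => (Y k)ᴴ) Z j = 1)
    (hZY : wronskian a b (fun k => (Z k)ᴴ) Y j = -1)
    (hZZ : wronskian a b (fun k => (Z k)ᴴ) Z j = 0) (u : ℕ → Fin n → ℂ) :
    u (j + 1) = Z (j + 1) *ᵥ wronskianVec a b (fun k => (Y k)ᴴ) u j
      - Y (j + 1) *ᵥ wronskianVec a b (fun k => (Z k)ᴴ) u j := by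
  -- The Wronskian identities say `M * N = 1`; hence also `N * M = 1`, whose first block row
  -- applied to `(u (j + 1), u j)` is the claim.
  set M := fromBlocks (-((Z j)ᴴ * Aup a j)) ((Z (j + 1))ᴴ * Alo b j)
    ((Y j)ᴴ * Aup a j) (-((Y (j + 1))ᴴ * Alo b j))
  set N := fromBlocks (Y (j + 1)) (Z (j + 1)) (Y j) (Z j)
  have hMN : M * N = 1 := by
    simp only [wronskian] at hYY hYZ hZY hZZ
    rw [fromBlocks_multiply, ← fromBlocks_one]
    congr 1
    · linear_combination (norm := (simp only [neg_mul, mul_assoc]; abel)) -hZY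
    · linear_combination (norm := (simp only [neg_mul, mul_assoc]; abel)) -hZZ
    · linear_combination (norm := (simp only [neg_mul, mul_assoc]; abel)) hYY
    · linear_combination (norm := (simp only [neg_mul, mul_assoc]; abel)) hYZ
  have hx := congrArg (· *ᵥ Sum.elim (u (j + 1)) (u j)) (mul_eq_one_comm.mp hMN)
  simp only [← mulVec_mulVec, one_mulVec, M, N, fromBlocks_mulVec, Sum.elim_comp_inl,
    Sum.elim_comp_inr] at hx
  have hinl := congrArg (· ∘ Sum.inl) hx
  simp only [Sum.elim_comp_inl] at hinl
  rw [← hinl]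
  simp only [wronskianVec, neg_mulVec, mulVec_mulVec, mulVec_add, mulVec_neg, mulVec_sub]
  abel

end Representation

section Estimates

variable {n : ℕ} {d a b : ℕ → Mat n}

theorem SolEq1v.eq_variation_of_constants (hd : ∀ j, (d j).IsHermitian) (hba : ∀ j, b j = a j)
    (ha : ∀ j, (a j).IsHermitian) {z₀ : ℝ} {Y Z : ℕ → Mat n} (hY : SolEq1 d a b z₀ Y)
    (hZ : SolEq1 d a b z₀ Z) (hY₀ : Y 0 = 0) (hY₁ : Y 1 = 1) (hZ₀ : Z 0 = 1) (hZ₁ : Z 1 = 0)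
    {z : ℂ} {u : ℕ → Fin n → ℂ} (hu : SolEq1v d a b z u) (j : ℕ) :
    u (j + 1) = Z (j + 1) *ᵥ (u 0 + (z - z₀) • ∑ k ∈ range j, (Y (k + 1))ᴴ *ᵥ u (k + 1))
      - Y (j + 1) *ᵥ (-u 1 + (z - z₀) • ∑ k ∈ range j, (Z (k + 1))ᴴ *ᵥ u (k + 1)) := by
  have hYs := hY.conjTranspose hd hba ha
  have hZs := hZ.conjTranspose hd hba ha
  have hW {U V : ℕ → Mat n} (hU : SolEq2 d a b z₀ U) (hV : SolEq1 d a b z₀ V) :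
      wronskian a b U V j = U 1 * V 0 - U 0 * V 1 := by
    rw [wronskian_eq_wronskian_zero hU hV]
    simp [wronskian, Aup, Alo]
    abel
  rw [eq_sub_mulVec_wronskianVec (a := a) (b := b) (Y := Y) (Z := Z)
    (by simp [hW hYs hY, hY₀]) (by simp [hW hYs hZ, hY₀, hY₁, hZ₀])
    (by simp [hW hZs hY, hY₁, hZ₀, hZ₁]) (by simp [hW hZs hZ, hZ₁]) u,
    wronskianVec_eq_add_sum hYs hu, wronskianVec_eq_add_sum hZs hu]
  simp [wronskianVec, Aup, Alo, hY₀, hY₁, hZ₀, hZ₁, neg_mulVec]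

theorem norm_add_smul_sum_conjTranspose_mulVec_le (x : Fin n → ℂ) (s : ℂ) (V : ℕ → Mat n)
    (v : ℕ → Fin n → ℂ) (j : ℕ) :
    ‖x + s • ∑ k ∈ range j, (V k)ᴴ *ᵥ v k‖ ≤ ‖x‖ + ‖s‖ * ∑ k ∈ range j, n * ‖V k‖ * ‖v k‖ := by
  refine (norm_add_le _ _).trans ?_
  rw [norm_smul]
  gcongr
  refine (norm_sum_le _ _).trans (sum_le_sum fun k _ => ?_)
  simpa [norm_conjTranspose] using norm_mulVec_le_card_mul (V k)ᴴ (v k)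

theorem norm_succ_le_of_eq_variation {Y Z : ℕ → Mat n} {u : ℕ → Fin n → ℂ} {x y : Fin n → ℂ}
    {s : ℂ} (hu : ∀ j, u (j + 1) = Z (j + 1) *ᵥ (x + s • ∑ k ∈ range j, (Y (k + 1))ᴴ *ᵥ u (k + 1))
      - Y (j + 1) *ᵥ (y + s • ∑ k ∈ range j, (Z (k + 1))ᴴ *ᵥ u (k + 1))) (j : ℕ) :
    ‖u (j + 1)‖ ≤ n * (‖Y (j + 1)‖ + ‖Z (j + 1)‖) * (‖x‖ + ‖y‖ +
      ‖s‖ * ∑ k ∈ range j, n * (‖Y (k + 1)‖ + ‖Z (k + 1)‖) * ‖u (k + 1)‖) := by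
  set S := ∑ k ∈ range j, n * (‖Y (k + 1)‖ + ‖Z (k + 1)‖) * ‖u (k + 1)‖
  have hS {V : ℕ → Mat n} (hV : ∀ k, ‖V k‖ ≤ ‖Y k‖ + ‖Z k‖) :
      ∑ k ∈ range j, n * ‖V (k + 1)‖ * ‖u (k + 1)‖ ≤ S :=
    sum_le_sum fun k _ => by gcongr; exact hV _
  calc ‖u (j + 1)‖
      ≤ n * ‖Z (j + 1)‖ * ‖x + s • ∑ k ∈ range j, (Y (k + 1))ᴴ *ᵥ u (k + 1)‖
        + n * ‖Y (j + 1)‖ * ‖y + s • ∑ k ∈ range j, (Z (k + 1))ᴴ *ᵥ u (k + 1)‖ := by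
        rw [hu j]
        refine (norm_sub_le _ _).trans (add_le_add ?_ ?_)
        · simpa using norm_mulVec_le_card_mul (Z (j + 1)) _
        · simpa using norm_mulVec_le_card_mul (Y (j + 1)) _
    _ ≤ n * ‖Z (j + 1)‖ * (‖x‖ + ‖s‖ * S) + n * ‖Y (j + 1)‖ * (‖y‖ + ‖s‖ * S) := by
        gcongr
        · exact (norm_add_smul_sum_conjTranspose_mulVec_le x s (fun k => Y (k + 1)) _ j).trans
            (by gcongr; exact hS fun k => le_add_of_nonneg_right (norm_nonneg _))
        · exact (norm_add_smul_sum_conjTranspose_mulVec_le y s (fun k => Z (k + 1)) _ j).trans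
            (by gcongr; exact hS fun k => le_add_of_nonneg_left (norm_nonneg _))
    _ ≤ n * (‖Y (j + 1)‖ + ‖Z (j + 1)‖) * (‖x‖ + ‖y‖ + ‖s‖ * S) := by
        have : (0 : ℝ) ≤ n * ‖Z (j + 1)‖ * ‖y‖ + n * ‖Y (j + 1)‖ * ‖x‖ := by positivity
        nlinarith

theorem SolEq1.memℓp {z : ℂ} {p : ℝ≥0∞} {V : ℕ → Mat n}
    (hV : SolEq1 d a b z V) (h : ∀ v, SolEq1v d a b z v → Memℓp v p) : Memℓp V p :=
  (Memℓp.finsetSum univ fun k _ => (h _ (hV.mulVec (Pi.single k 1))).norm).mono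
    fun j => norm_le_sum_norm_mulVec_single (V j)

end Estimates

theorem statement14_general {n : ℕ} (d a b : ℕ → Mat n)
    (hd : ∀ j, (d j).IsHermitian) (hba : ∀ j, b j = a j) (hapos : ∀ j, (a j).PosDef)
    (p : ℝ) (hp1 : 1 ≤ p) (hp2 : p ≤ 2) (z0 : ℝ)
    (h1 : ∀ u : ℕ → Fin n → ℂ, SolEq1v d a b (z0 : ℂ) u →
      Summable (fun j : ℕ => ‖u j‖ ^ p)) :
    ∀ z : ℂ, ∀ u : ℕ → Fin n → ℂ, SolEq1v d a b z u →
      Summable (fun j : ℕ => ‖u j‖ ^ p) := by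
  intro z u hu
  have hp : (ENNReal.ofReal p).toReal = p := ENNReal.toReal_ofReal (by linarith)
  have hp0 : 0 < (ENNReal.ofReal p).toReal := by linarith
  have hsol {V : ℕ → Mat n} (hV : SolEq1 d a b z0 V) :
      Memℓp (fun j => V (j + 1)) (ENNReal.ofReal p) :=
    (memℓp_nat_add_iff hp0 1).2 <| hV.memℓp fun v hv => memℓp_gen (by rw [hp]; exact h1 v hv)
  set Y := fundSol d a b z0 0 1
  set Z := fundSol d a b z0 1 0
  have hY : SolEq1 d a b z0 Y := solEq1_fundSol (fun j => (hapos j).isUnit) _ _ _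
  have hZ : SolEq1 d a b z0 Z := solEq1_fundSol (fun j => (hapos j).isUnit) _ _ _
  set f : ℕ → ℝ := fun j => n * (‖Y (j + 1)‖ + ‖Z (j + 1)‖)
  have hf : Memℓp f (ENNReal.ofReal p) := ((hsol hY).norm.add (hsol hZ).norm).const_mul _
  have hf2 : Summable fun j => f j ^ 2 := by
    simpa using (hf.of_exponent_ge (p := 2) (by simpa using hp2)).summable (by norm_num)
  obtain ⟨K, hK⟩ := exists_le_const_mul_of_le_mul_add_sum (g := fun j => ‖u (j + 1)‖)
    (norm_nonneg (z - z0)) (by positivity) (fun j => by positivity) hf2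
    (norm_succ_le_of_eq_variation
      (hu.eq_variation_of_constants hd hba (fun j => (hapos j).isHermitian) hY hZ rfl rfl rfl rfl))
  have hu' : Memℓp (fun j => u (j + 1)) (ENNReal.ofReal p) := (hf.const_mul K).mono hK
  simpa [hp] using ((memℓp_nat_add_iff hp0 1).1 hu').summable hp0

/-- Theorem 3: under (simm), for `1 ≤ p ≤ 2`, if at some real `z₀` all
solutions of (1v) are in `l^p_n`, then this holds for every `z ∈ ℂ`. -/
theorem statement14 {n : ℕ} (hn : 1 ≤ n) (d a b : ℕ → Mat n)
    (hd : ∀ j, (d j).IsHermitian) (hba : ∀ j, b j = a j) (hapos : ∀ j, (a j).PosDef)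
    (p : ℝ) (hp1 : 1 ≤ p) (hp2 : p ≤ 2) (z0 : ℝ)
    (h1 : ∀ u : ℕ → Fin n → ℂ, SolEq1v d a b (z0 : ℂ) u →
      Summable (fun j : ℕ => ‖u j‖ ^ p)) :
    ∀ z : ℂ, ∀ u : ℕ → Fin n → ℂ, SolEq1v d a b z u →
      Summable (fun j : ℕ => ‖u j‖ ^ p) :=
  statement14_general d a b hd hba hapos p hp1 hp2 z0 h1
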